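/- arXiv:1705.09081 — 2 statements merged into one kernel-verified Lean document; each statement's English description precedes it below -/
import Mathlib

section
/- Let I = [t0, tf] and let E, Q : ℝ → Matrix (Fin n) (Fin n) ℝ be continuously differentiable on I and J, R, K : ℝ → Matrix (Fin n) (Fin n) ℝ, B, P : ℝ → Matrix (Fin n) (Fin m) ℝ, S, N : ℝ → Matrix (Fin m) (Fin m) ℝ be continuous on I with S(t)ᵀ = S(t) and N(t)ᵀ = −N(t) for all t ∈ I. Assume the skew-adjointness conditions: for all t ∈ I, Q(t)ᵀ * E(t) = E(t)ᵀ * Q(t) and (d/dt)(Q(t)ᵀ * E(t)) = Q(t)ᵀ * (E(t) * K(t) − J(t) * Q(t)) + (E(t) * K(t) − J(t) * Q(t))ᵀ * Q(t). Let u : ℝ → ℝᵐ be continuous, let x : ℝ → ℝⁿ be continuously differentiable with E(t) ⬝ x'(t) = ((J(t) − R(t)) * Q(t) − E(t) * K(t)) ⬝ x(t) + (B(t) − P(t)) ⬝ u(t) for all t ∈ I, and let y(t) = (B(t) + P(t))ᵀ * Q(t) ⬝ x(t) + (S(t) + N(t)) ⬝ u(t). Then for all t ∈ I, (d/dt)[(1/2)⟪x(t),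 (Q(t)ᵀ * E(t)) ⬝ x(t)⟫] = ⟪u(t), y(t)⟫ − (⟪x(t), (Q(t)ᵀ*R(t)*Q(t)) ⬝ x(t)⟫ + 2⟪x(t), (Q(t)ᵀ*P(t)) ⬝ u(t)⟫ + ⟪u(t), S(t) ⬝ u(t)⟫). -/
open Matrix Set

/-- `M'` is the entrywise derivative of the matrix-valued function `M` at `t`. -/
def MatHasDerivAt {α β : Type*} (M M' : ℝ → Matrix α β ℝ) (t : ℝ) : Prop :=
  ∀ i j, HasDerivAt (fun s => M s i j) (M' t i j) t

/-!
Since `QᵀE` is symmetric, `dℋ/dt = ⟪Qx, E ẋ⟫ + ½ xᵀ (d/dt QᵀE) x`, and the skew-adjointness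
condition turns the second term into `⟪Qx, (EK − JQ)x⟫`. This cancels the `JQ` and `EK` parts of
`E ẋ` in the state equation, leaving `⟪Qx, (B − P)u⟫ − ⟪Qx, RQx⟫`, which is `⟪u, y⟫` minus the
dissipation form because `⟪u, Nu⟫ = 0` for skew `N`.
-/

theorem HasDerivAt.dotProduct {𝕜 ι : Type*} [NontriviallyNormedField 𝕜] [Fintype ι]
    {v w : 𝕜 → ι → 𝕜} {v' w' : ι → 𝕜} {t : 𝕜} (hv : HasDerivAt v v' t) (hw : HasDerivAt w w' t) :
    HasDerivAt (fun s => v s ⬝ᵥ w s) (v' ⬝ᵥ w t + v t ⬝ᵥ w') t := by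
  change HasDerivAt (fun s => ∑ i, v s i * w s i) (∑ i, v' i * w t i + ∑ i, v t i * w' i) t
  rw [← Finset.sum_add_distrib]
  exact HasDerivAt.fun_sum fun i _ => (hasDerivAt_pi.1 hv i).mul (hasDerivAt_pi.1 hw i)

theorem MatHasDerivAt.mulVec {ι κ : Type*} [Fintype κ] {M M' : ℝ → Matrix ι κ ℝ}
    {v : ℝ → κ → ℝ} {v' : κ → ℝ} {t : ℝ} (hM : MatHasDerivAt M M' t) (hv : HasDerivAt v v' t) :
    HasDerivAt (fun s => M s *ᵥ v s) (M' t *ᵥ v t + M t *ᵥ v') t :=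
  hasDerivAt_pi.2 fun i => (hasDerivAt_pi.2 (hM i)).dotProduct hv

theorem dotProduct_mulVec_add_transpose {α ι : Type*} [CommSemiring α] [Fintype ι]
    (A : Matrix ι ι α) (v : ι → α) :
    v ⬝ᵥ (A + Aᵀ) *ᵥ v = 2 * (v ⬝ᵥ A *ᵥ v) := by
  rw [add_mulVec, dotProduct_add, dotProduct_transpose_mulVec, two_mul]

theorem dotProduct_mulVec_self_eq_zero_of_transpose_eq_neg {α ι : Type*} [CommRing α]
    [IsAddTorsionFree α] [Fintype ι] {A : Matrix ι ι α} (hA : Aᵀ = -A) (v : ι → α) :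
    v ⬝ᵥ A *ᵥ v = 0 := by
  have h := dotProduct_transpose_mulVec A v v
  rw [hA, neg_mulVec, dotProduct_neg] at h
  exact self_eq_neg.mp h.symm

theorem power_balance_at_instant {𝕜 ι κ : Type*} [Field 𝕜] [CharZero 𝕜] [Fintype ι] [Fintype κ]
    {E Q J R K : Matrix ι ι 𝕜} {B P : Matrix ι κ 𝕜} {S N : Matrix κ κ 𝕜}
    {x x' : ι → 𝕜} {u : κ → 𝕜} (hN : Nᵀ = -N)
    (hode : E *ᵥ x' = ((J - R) * Q - E * K) *ᵥ x + (B - P) *ᵥ u) :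
    x ⬝ᵥ (Qᵀ * E) *ᵥ x' + (1 / 2) * (x ⬝ᵥ (Qᵀ * (E * K - J * Q) + (E * K - J * Q)ᵀ * Q) *ᵥ x) =
      u ⬝ᵥ (((B + P)ᵀ * Q) *ᵥ x + (S + N) *ᵥ u) -
        (x ⬝ᵥ (Qᵀ * R * Q) *ᵥ x + 2 * (x ⬝ᵥ (Qᵀ * P) *ᵥ u) + u ⬝ᵥ S *ᵥ u) := by
  have hsymm : (Qᵀ * (E * K - J * Q))ᵀ = (E * K - J * Q)ᵀ * Q := by
    rw [transpose_mul, transpose_transpose]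
  rw [← hsymm, dotProduct_mulVec_add_transpose, add_mulVec,
    dotProduct_add u, dotProduct_add u, dotProduct_mulVec_self_eq_zero_of_transpose_eq_neg hN]
  simp only [← mulVec_mulVec, dotProduct_transpose_mulVec, hode, add_mulVec, sub_mulVec,
    add_dotProduct, sub_dotProduct, dotProduct_comm (Q *ᵥ x)]
  ring

theorem pHDAE_power_balance_general
    (n m : ℕ) (t0 tf : ℝ)
    (E Q J R K : ℝ → Matrix (Fin n) (Fin n) ℝ)
    (B P : ℝ → Matrix (Fin n) (Fin m) ℝ)
    (S N : ℝ → Matrix (Fin m) (Fin m) ℝ)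
    (hNskew : ∀ t ∈ Set.Icc t0 tf, (N t)ᵀ = -N t)
    (hsym : ∀ t ∈ Set.Icc t0 tf, (Q t)ᵀ * E t = (E t)ᵀ * Q t)
    (hQE : ∀ t ∈ Set.Icc t0 tf,
      MatHasDerivAt (fun s => (Q s)ᵀ * E s)
        (fun s => (Q s)ᵀ * (E s * K s - J s * Q s) +
          (E s * K s - J s * Q s)ᵀ * Q s) t)
    (u : ℝ → Fin m → ℝ)
    (x x' : ℝ → Fin n → ℝ)
    (hx : ∀ t ∈ Set.Icc t0 tf, HasDerivAt x (x' t) t)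
    (hode : ∀ t ∈ Set.Icc t0 tf, E t *ᵥ x' t =
      ((J t - R t) * Q t - E t * K t) *ᵥ x t + (B t - P t) *ᵥ u t)
    (y : ℝ → Fin m → ℝ)
    (hy : ∀ t ∈ Set.Icc t0 tf,
      y t = ((B t + P t)ᵀ * Q t) *ᵥ x t + (S t + N t) *ᵥ u t) :
    ∀ t ∈ Set.Icc t0 tf,
      HasDerivAt (fun s => (1 / 2 : ℝ) * (x s ⬝ᵥ ((Q s)ᵀ * E s) *ᵥ x s))
        (u t ⬝ᵥ y t -
          (x t ⬝ᵥ ((Q t)ᵀ * R t * Q t) *ᵥ x t +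
            2 * (x t ⬝ᵥ ((Q t)ᵀ * P t) *ᵥ u t) +
            u t ⬝ᵥ S t *ᵥ u t)) t := by
  intro t ht
  have hQE_symm : ((Q t)ᵀ * E t)ᵀ = (Q t)ᵀ * E t := by
    rw [transpose_mul, transpose_transpose, hsym t ht]
  have hH := ((hx t ht).dotProduct ((hQE t ht).mulVec (hx t ht))).const_mul (1 / 2 : ℝ)
  refine hH.congr_deriv ?_
  rw [hy t ht, ← power_balance_at_instant (hNskew t ht) (hode t ht),
    ← dotProduct_transpose_mulVec, hQE_symm, dotProduct_add]
  ring

/-- Power balance for a linear time-varying port-Hamiltonian descriptor system: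
along any classical solution, `d/dt ℋ(x) = uᵀy − [x;u]ᵀ W [x;u]`. -/
theorem pHDAE_power_balance
    (n m : ℕ) (t0 tf : ℝ) (htf : t0 ≤ tf)
    (E Q J R K : ℝ → Matrix (Fin n) (Fin n) ℝ)
    (B P : ℝ → Matrix (Fin n) (Fin m) ℝ)
    (S N : ℝ → Matrix (Fin m) (Fin m) ℝ)
    (hEc : ContinuousOn E (Set.Icc t0 tf)) (hQc : ContinuousOn Q (Set.Icc t0 tf))
    (hJc : ContinuousOn J (Set.Icc t0 tf)) (hRc : ContinuousOn R (Set.Icc t0 tf))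
    (hKc : ContinuousOn K (Set.Icc t0 tf)) (hBc : ContinuousOn B (Set.Icc t0 tf))
    (hPc : ContinuousOn P (Set.Icc t0 tf)) (hSc : ContinuousOn S (Set.Icc t0 tf))
    (hNc : ContinuousOn N (Set.Icc t0 tf))
    (hSsym : ∀ t ∈ Set.Icc t0 tf, (S t)ᵀ = S t)
    (hNskew : ∀ t ∈ Set.Icc t0 tf, (N t)ᵀ = -N t)
    (hsym : ∀ t ∈ Set.Icc t0 tf, (Q t)ᵀ * E t = (E t)ᵀ * Q t)
    (hQE : ∀ t ∈ Set.Icc t0 tf,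
      MatHasDerivAt (fun s => (Q s)ᵀ * E s)
        (fun s => (Q s)ᵀ * (E s * K s - J s * Q s) +
          (E s * K s - J s * Q s)ᵀ * Q s) t)
    (u : ℝ → Fin m → ℝ) (huc : ContinuousOn u (Set.Icc t0 tf))
    (x x' : ℝ → Fin n → ℝ)
    (hx : ∀ t ∈ Set.Icc t0 tf, HasDerivAt x (x' t) t)
    (hx'c : ContinuousOn x' (Set.Icc t0 tf))
    (hode : ∀ t ∈ Set.Icc t0 tf, E t *ᵥ x' t =
      ((J t - R t) * Q t - E t * K t) *ᵥ x t + (B t - P t) *ᵥ u t)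
    (y : ℝ → Fin m → ℝ)
    (hy : ∀ t ∈ Set.Icc t0 tf,
      y t = ((B t + P t)ᵀ * Q t) *ᵥ x t + (S t + N t) *ᵥ u t) :
    ∀ t ∈ Set.Icc t0 tf,
      HasDerivAt (fun s => (1 / 2 : ℝ) * (x s ⬝ᵥ ((Q s)ᵀ * E s) *ᵥ x s))
        (u t ⬝ᵥ y t -
          (x t ⬝ᵥ ((Q t)ᵀ * R t * Q t) *ᵥ x t +
            2 * (x t ⬝ᵥ ((Q t)ᵀ * P t) *ᵥ u t) +
            u t ⬝ᵥ S t *ᵥ u t)) t :=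
  pHDAE_power_balance_general n m t0 tf E Q J R K B P S N hNskew hsym hQE u x x' hx hode y hy
end

section
/- Let K : ℝ → Matrix (Fin n) (Fin n) ℝ be continuous on an interval I containing t0 with K(t)ᵀ = −K(t) for all t ∈ I, and let V : ℝ → Matrix (Fin n) (Fin n) ℝ be continuously differentiable with V(t0) = I_n and V'(t) = V(t) * K(t) for all t ∈ I. Then V(t) * V(t)ᵀ = I_n for all t ∈ I; that is, the solution of the matrix differential equation V' = VK with skew-symmetric K and identity initial value is pointwise orthogonal. -/
/-! The Gram matrix `V Vᵀ` has derivative `V K Vᵀ + V Kᵀ Vᵀ = V (K + Kᵀ) Vᵀ = 0`, so it is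
constant on the interval and equal to its value `1` at `t0`. -/

open Matrix Set

namespace MatHasDerivAt

variable {l m p : Type*} {t : ℝ}

theorem congr_deriv {M M' N' : ℝ → Matrix l m ℝ} (h : MatHasDerivAt M M' t)
    (h' : M' t = N' t) : MatHasDerivAt M N' t := by
  intro i j
  rw [← h']
  exact h i j

theorem transpose {M M' : ℝ → Matrix l m ℝ} (h : MatHasDerivAt M M' t) :
    MatHasDerivAt (fun s => (M s)ᵀ) (fun s => (M' s)ᵀ) t :=
  fun i j => h j i

theorem mul [Fintype m] {A A' : ℝ → Matrix l m ℝ} {B B' : ℝ → Matrix m p ℝ}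
    (hA : MatHasDerivAt A A' t) (hB : MatHasDerivAt B B' t) :
    MatHasDerivAt (fun s => A s * B s) (fun s => A' s * B s + A s * B' s) t := by
  intro i j
  simp only [Matrix.add_apply, mul_apply, ← Finset.sum_add_distrib]
  exact HasDerivAt.fun_sum fun k _ => (hA i k).fun_mul (hB k j)

theorem eq_of_convex_of_deriv_zero {I : Set ℝ} (hI : Convex ℝ I) {M : ℝ → Matrix l m ℝ}
    (hM : ∀ t ∈ I, MatHasDerivAt M 0 t) {s t : ℝ} (hs : s ∈ I) (ht : t ∈ I) :
    M t = M s := by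
  ext i j
  have hconst := hI.norm_image_sub_le_of_norm_hasDerivWithin_le (f := fun u => M u i j) (C := 0)
    (fun u hu => (hM u hu i j).hasDerivWithinAt) (fun _ _ => by simp) hs ht
  simpa [sub_eq_zero] using hconst

end MatHasDerivAt

theorem solution_matrixODE_skew_is_orthogonal_general
    (n : ℕ) (t0 : ℝ) (I : Set ℝ) (hI : Convex ℝ I) (ht0 : t0 ∈ I)
    (K V : ℝ → Matrix (Fin n) (Fin n) ℝ)
    (hKskew : ∀ t ∈ I, (K t)ᵀ = -K t)
    (hV0 : V t0 = 1)
    (hV : ∀ t ∈ I, MatHasDerivAt V (fun s => V s * K s) t) :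
    ∀ t ∈ I, V t * (V t)ᵀ = 1 := by
  intro t ht
  have hgram : ∀ s ∈ I, MatHasDerivAt (fun u => V u * (V u)ᵀ) 0 s := fun s hs =>
    ((hV s hs).mul (hV s hs).transpose).congr_deriv <| by
      rw [Pi.zero_apply, transpose_mul, hKskew s hs, Matrix.mul_assoc, ← Matrix.mul_add,
        Matrix.neg_mul, add_neg_cancel, Matrix.mul_zero]
  simpa [hV0] using MatHasDerivAt.eq_of_convex_of_deriv_zero hI hgram ht0 ht

/-- If `K` is pointwise skew-symmetric on an interval `I` containing `t0` and
`V` solves `V' = V K` with `V(t0) = I`, then `V` is pointwise orthogonal. -/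
theorem solution_matrixODE_skew_is_orthogonal
    (n : ℕ) (t0 : ℝ) (I : Set ℝ) (hI : Convex ℝ I) (ht0 : t0 ∈ I)
    (K V : ℝ → Matrix (Fin n) (Fin n) ℝ)
    (hKc : ContinuousOn K I)
    (hKskew : ∀ t ∈ I, (K t)ᵀ = -K t)
    (hVc : ContinuousOn V I)
    (hV0 : V t0 = 1)
    (hV : ∀ t ∈ I, MatHasDerivAt V (fun s => V s * K s) t) :
    ∀ t ∈ I, V t * (V t)ᵀ = 1 :=
  solution_matrixODE_skew_is_orthogonal_general n t0 I hI ht0 K V hKskew hV0 hV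
end
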